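/- arXiv:2406.15410 — 6 statements merged into one kernel-verified Lean document; each statement's English description precedes it below -/
import Mathlib

section
/- Let (H →∂ G, ▷) be a crossed module. Let g₁₂, g₁₃, g₁₄, g₂₃, g₂₄, g₃₄ ∈ G and h₁₂₃, h₁₂₄, h₁₃₄, h₂₃₄ ∈ H. Assume: (1) g₁₂ = g₂₃⁻¹ ∂(h₁₂₃)⁻¹ g₁₃ (flatness of face 123); (2) h₁₃₄ (g₃₄ ▷ h₁₂₃) h₂₃₄⁻¹ h₁₂₄⁻¹ = 1 (flatness of tetrahedron 1234); (3) ∂(h₂₃₄) g₃₄ g₂₃ g₂₄⁻¹ = 1 (flatness of face 234); (4) ∂(h₁₃₄) g₃₄ g₁₃ g₁₄⁻¹ = 1 (flatness of face 134). Then ∂(h₁₂₄) g₂₄ g₁₂ g₁₄⁻¹ = 1 (flatness of face 124). -/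
/-- A crossed module `(H --∂--> G, ▷)`: groups `G`, `H`, a group homomorphism
`δ : H →* G`, and a left action of `G` on `H` in which every `g : G` acts as a
group automorphism of `H` (encoded as `act : G →* MulAut H`), satisfying the
equivariance axiom and the Peiffer identity. -/
structure CrossedModule (G H : Type*) [Group G] [Group H] where
  δ : H →* G
  act : G →* MulAut H
  equivariance : ∀ (g : G) (h : H), δ (act g h) = g * δ h * g⁻¹
  peiffer : ∀ (h h' : H), act (δ h) h' = h * h' * h⁻¹

/-! Applying `∂` to the tetrahedron relation and using equivariance expresses `∂ h₁₂₄` through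
`∂ h₁₃₄`, `∂ h₁₂₃` and `∂ h₂₃₄`; substituting this and the relations of faces 123, 134 and 234
into face 124 leaves an identity that holds in every group. -/

/-- Flatness of faces 123, 234, 134 and of the tetrahedron 1234 implies
flatness of face 124. -/
theorem face124_flat {G H : Type*} [Group G] [Group H] (X : CrossedModule G H)
    (g₁₂ g₁₃ g₁₄ g₂₃ g₂₄ g₃₄ : G) (h₁₂₃ h₁₂₄ h₁₃₄ h₂₃₄ : H)
    (h1 : g₁₂ = g₂₃⁻¹ * (X.δ h₁₂₃)⁻¹ * g₁₃)
    (h2 : h₁₃₄ * X.act g₃₄ h₁₂₃ * h₂₃₄⁻¹ * h₁₂₄⁻¹ = 1)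
    (h3 : X.δ h₂₃₄ * g₃₄ * g₂₃ * g₂₄⁻¹ = 1)
    (h4 : X.δ h₁₃₄ * g₃₄ * g₁₃ * g₁₄⁻¹ = 1) :
    X.δ h₁₂₄ * g₂₄ * g₁₂ * g₁₄⁻¹ = 1 := by
  have e124 : h₁₂₄ = h₁₃₄ * X.act g₃₄ h₁₂₃ * h₂₃₄⁻¹ := (mul_inv_eq_one.mp h2).symm
  have e24 : g₂₄ = X.δ h₂₃₄ * g₃₄ * g₂₃ := (mul_inv_eq_one.mp h3).symm
  have e14 : g₁₄ = X.δ h₁₃₄ * g₃₄ * g₁₃ := (mul_inv_eq_one.mp h4).symm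
  rw [e124, e24, e14, h1, map_mul, map_mul, map_inv, X.equivariance]
  group
end

section
/- Let (H →∂ G, ▷) be a crossed module. Let g₁₃, g₁₄, g₁₅, g₃₄, g₃₅, g₄₅ ∈ G and h₁₂₃, h₁₃₄, h₁₃₅, h₁₄₅ ∈ H. Assume g₁₄ = ∂(h₁₃₄) g₃₄ g₁₃, g₁₅ = ∂(h₁₄₅) g₄₅ g₁₄, and g₁₅ = ∂(h₁₃₅) g₃₅ g₁₃ (flatness of faces 134, 145, 135). Then h₁₃₅⁻¹ h₁₄₅ (g₄₅ ▷ h₁₃₄) ((g₄₅ g₃₄) ▷ h₁₂₃) = (g₃₅ ▷ h₁₂₃) h₁₃₅⁻¹ h₁₄₅ (g₄₅ ▷ h₁₃₄). -/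
namespace CrossedModule

variable {G H : Type*} [Group G] [Group H] (X : CrossedModule G H)

theorem δ_act_mul (g : G) (h : H) : X.δ (X.act g h) * g = g * X.δ h := by
  rw [X.equivariance]
  group

theorem mul_act_eq_act_mul_of_δ_mul_eq {k : H} {g g' : G} (hk : X.δ k * g' = g) (h : H) :
    k * X.act g' h = X.act g h * k := by
  have peiffer := X.peiffer k (X.act g' h)
  rw [← MulAut.mul_apply, ← map_mul, hk] at peiffer
  rw [peiffer]
  group

end CrossedModule

/-- Under flatness of faces 134, 145 and 135, the element
`h₁₃₅⁻¹ h₁₄₅ (g₄₅ ▷ h₁₃₄)` commutes past the action of `g₄₅ g₃₄` versus `g₃₅` on `h₁₂₃`. -/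
theorem slide_action {G H : Type*} [Group G] [Group H] (X : CrossedModule G H)
    (g₁₃ g₁₄ g₁₅ g₃₄ g₃₅ g₄₅ : G) (h₁₂₃ h₁₃₄ h₁₃₅ h₁₄₅ : H)
    (h1 : g₁₄ = X.δ h₁₃₄ * g₃₄ * g₁₃)
    (h2 : g₁₅ = X.δ h₁₄₅ * g₄₅ * g₁₄)
    (h3 : g₁₅ = X.δ h₁₃₅ * g₃₅ * g₁₃) :
    h₁₃₅⁻¹ * h₁₄₅ * X.act g₄₅ h₁₃₄ * X.act (g₄₅ * g₃₄) h₁₂₃ =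
      X.act g₃₅ h₁₂₃ * (h₁₃₅⁻¹ * h₁₄₅ * X.act g₄₅ h₁₃₄) := by
  apply X.mul_act_eq_act_mul_of_δ_mul_eq
  calc X.δ (h₁₃₅⁻¹ * h₁₄₅ * X.act g₄₅ h₁₃₄) * (g₄₅ * g₃₄)
      = (X.δ h₁₃₅)⁻¹ * X.δ h₁₄₅ * (X.δ (X.act g₄₅ h₁₃₄) * g₄₅) * g₃₄ := by
        simp only [map_mul, map_inv]
        group
    _ = (X.δ h₁₃₅)⁻¹ * (X.δ h₁₄₅ * g₄₅ * (X.δ h₁₃₄ * g₃₄ * g₁₃)) * g₁₃⁻¹ := by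
        rw [X.δ_act_mul]
        group
    _ = (X.δ h₁₃₅)⁻¹ * (X.δ h₁₃₅ * g₃₅ * g₁₃) * g₁₃⁻¹ := by rw [← h1, ← h2, h3]
    _ = g₃₅ := by group
end

section
/- Let (H →∂ G, ▷) be a crossed module. Let g₁₂, g₁₃, g₁₄, g₂₃, g₂₄, g₃₄ ∈ G and h₁₂₃, h₁₂₄, h₁₃₄, h₂₃₄ ∈ H. Assume: (1) g₂₄ = ∂(h₁₂₄)⁻¹ g₁₄ g₁₂⁻¹ (flatness of face 124); (2) h₂₃₄ = h₁₂₄⁻¹ h₁₃₄ (g₃₄ ▷ h₁₂₃) (flatness of tetrahedron 1234); (3) g₁₃ = ∂(h₁₂₃) g₂₃ g₁₂ (flatness of face 123); (4) g₁₄ = ∂(h₁₃₄) g₃₄ g₁₃ (flatness of face 134). Then ∂(h₂₃₄) g₃₄ g₂₃ g₂₄⁻¹ = 1 (flatness of face 234). -/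
/-- Flatness of faces 124, 123, 134 and of tetrahedron 1234 implies flatness of
face 234. -/
theorem face234_flat {G H : Type*} [Group G] [Group H] (X : CrossedModule G H)
    (g₁₂ g₁₃ g₁₄ g₂₃ g₂₄ g₃₄ : G) (h₁₂₃ h₁₂₄ h₁₃₄ h₂₃₄ : H)
    (h1 : g₂₄ = (X.δ h₁₂₄)⁻¹ * g₁₄ * g₁₂⁻¹)
    (h2 : h₂₃₄ = h₁₂₄⁻¹ * h₁₃₄ * X.act g₃₄ h₁₂₃)
    (h3 : g₁₃ = X.δ h₁₂₃ * g₂₃ * g₁₂)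
    (h4 : g₁₄ = X.δ h₁₃₄ * g₃₄ * g₁₃) :
    X.δ h₂₃₄ * g₃₄ * g₂₃ * g₂₄⁻¹ = 1 := by
  have boundary_h₂₃₄ :
      X.δ h₂₃₄ = (X.δ h₁₂₄)⁻¹ * X.δ h₁₃₄ * (g₃₄ * X.δ h₁₂₃ * g₃₄⁻¹) := by
    rw [h2, map_mul, map_mul, map_inv, X.equivariance]
  rw [boundary_h₂₃₄, h1, h4, h3]
  group
end

section
/- Let (H →∂ G, ▷) be a crossed module. Let g₁₂, g₁₃, g₁₅, g₂₃, g₂₅, g₃₅ ∈ G and h₁₂₃, h₁₂₅, h₁₃₅, h₂₃₅ ∈ H. Assume: (1) g₃₅ = ∂(h₁₃₅)⁻¹ g₁₅ g₁₃⁻¹ (flatness of face 135); (2) h₂₃₅ = h₁₂₅⁻¹ h₁₃₅ (g₃₅ ▷ h₁₂₃) (flatness of tetrahedron 1235); (3) g₁₃ = ∂(h₁₂₃) g₂₃ g₁₂ (flatness of face 123); (4) g₂₅ = ∂(h₁₂₅)⁻¹ g₁₅ g₁₂⁻¹ (flatness of face 125). Then ∂(h₂₃₅) g₃₅ g₂₃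 g₂₅⁻¹ = 1 (flatness of face 235). -/
/-- Flatness of faces 135, 123, 125 and of tetrahedron 1235 implies flatness of
face 235. -/
theorem face235_flat {G H : Type*} [Group G] [Group H] (X : CrossedModule G H)
    (g₁₂ g₁₃ g₁₅ g₂₃ g₂₅ g₃₅ : G) (h₁₂₃ h₁₂₅ h₁₃₅ h₂₃₅ : H)
    (h1 : g₃₅ = (X.δ h₁₃₅)⁻¹ * g₁₅ * g₁₃⁻¹)
    (h2 : h₂₃₅ = h₁₂₅⁻¹ * h₁₃₅ * X.act g₃₅ h₁₂₃)
    (h3 : g₁₃ = X.δ h₁₂₃ * g₂₃ * g₁₂)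
    (h4 : g₂₅ = (X.δ h₁₂₅)⁻¹ * g₁₅ * g₁₂⁻¹) :
    X.δ h₂₃₅ * g₃₅ * g₂₃ * g₂₅⁻¹ = 1 := by
  have δ_h₂₃₅ : X.δ h₂₃₅ = (X.δ h₁₂₅)⁻¹ * X.δ h₁₃₅ * (g₃₅ * X.δ h₁₂₃ * g₃₅⁻¹) := by
    rw [h2, map_mul, map_mul, map_inv, X.equivariance]
  calc X.δ h₂₃₅ * g₃₅ * g₂₃ * g₂₅⁻¹
      = (X.δ h₁₂₅)⁻¹ * X.δ h₁₃₅ * g₃₅ * (X.δ h₁₂₃ * g₂₃ * g₁₂) * g₁₂⁻¹ * g₂₅⁻¹ := by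
        rw [δ_h₂₃₅]; group
    _ = (X.δ h₁₂₅)⁻¹ * (X.δ h₁₃₅ * g₃₅ * g₁₃) * g₁₂⁻¹ * g₂₅⁻¹ := by rw [h3]; group
    _ = (X.δ h₁₂₅)⁻¹ * g₁₅ * g₁₂⁻¹ * g₂₅⁻¹ := by rw [h1]; group
    _ = 1 := by rw [h4, mul_inv_cancel]
end

section
/- Let (H →∂ G, ▷) be a crossed module. Let g₁₃, g₁₄, g₁₅, g₃₄, g₃₅, g₄₅ ∈ G and h₁₃₄, h₁₃₅, h₁₄₅, h₃₄₅ ∈ H. Assume: (1) g₃₅ = ∂(h₁₃₅)⁻¹ g₁₅ g₁₃⁻¹ (flatness of face 135); (2) h₃₄₅ = h₁₃₅⁻¹ h₁₄₅ (g₄₅ ▷ h₁₃₄) (flatness of tetrahedron 1345); (3) g₁₄ = ∂(h₁₃₄) g₃₄ g₁₃ (flatness of face 134); (4) g₁₅ = ∂(h₁₄₅) g₄₅ g₁₄ (flatness of face 145). Then ∂(h₃₄₅) g₄₅ g₃₄ g₃₅⁻¹ = 1 (flatness of face 345). -/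
/-- Flatness of faces 135, 134, 145 and of tetrahedron 1345 implies flatness of
face 345. -/
theorem face345_flat {G H : Type*} [Group G] [Group H] (X : CrossedModule G H)
    (g₁₃ g₁₄ g₁₅ g₃₄ g₃₅ g₄₅ : G) (h₁₃₄ h₁₃₅ h₁₄₅ h₃₄₅ : H)
    (h1 : g₃₅ = (X.δ h₁₃₅)⁻¹ * g₁₅ * g₁₃⁻¹)
    (h2 : h₃₄₅ = h₁₃₅⁻¹ * h₁₄₅ * X.act g₄₅ h₁₃₄)
    (h3 : g₁₄ = X.δ h₁₃₄ * g₃₄ * g₁₃)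
    (h4 : g₁₅ = X.δ h₁₄₅ * g₄₅ * g₁₄) :
    X.δ h₃₄₅ * g₄₅ * g₃₄ * g₃₅⁻¹ = 1 := by
  have hδ : X.δ h₃₄₅ = (X.δ h₁₃₅)⁻¹ * X.δ h₁₄₅ * (g₄₅ * X.δ h₁₃₄ * g₄₅⁻¹) := by
    rw [h2, map_mul, map_mul, map_inv, X.equivariance]
  rw [hδ, h1, h4, h3]
  group
end

section
/- Let (H →∂ G, ▷) be a crossed module with G and H finite groups. Then the number of tuples (g₁₂, g₁₃, g₁₄, g₂₃, g₂₄, g₃₄, h₁₂₃, h₁₂₄, h₁₃₄, h₂₃₄) ∈ G⁶ × H⁴ satisfying the four face flatness conditions ∂(h₁₂₃) g₂₃ g₁₂ g₁₃⁻¹ = 1, ∂(h₁₂₄) g₂₄ g₁₂ g₁₄⁻¹ = 1, ∂(h₁₃₄) g₃₄ g₁₃ g₁₄⁻¹ = 1, ∂(h₂₃₄) g₃₄ g₂₃ g₂₄⁻¹ = 1, together with the tetrahedron flatness condition h₁₃₄ (g₃₄ ▷ h₁₂₃) h₂₃₄⁻¹ h₁₂₄⁻¹ = 1, is exactly |G|³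 · |H|³. (Equivalently, the state-sum invariant of the 3-ball D³ computed from the triangulation by a single tetrahedron equals |H| / |G|.) -/
/-!
The edges `12, 13, 14` and the faces `123, 134, 234` can be coloured freely. The flatness of the
faces `123` and `134` then determines `g₂₃` and `g₃₄`, tetrahedron flatness determines `h₁₂₄`, and
flatness of the face `124` determines `g₂₄`. Flatness of the last face `234` is then automatic:
applying `∂` to the tetrahedron condition and using equivariance expresses `∂ h₂₃₄` through the
other three faces.
-/

theorem mul_mul_mul_inv_eq_one_iff {G : Type*} [Group G] {x a b c : G} :
    x * a * b * c⁻¹ = 1 ↔ a = x⁻¹ * c * b⁻¹ := by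
  rw [mul_inv_eq_one, mul_assoc x, ← eq_inv_mul_iff_mul_eq, eq_mul_inv_iff_mul_eq]

namespace CrossedModule

variable {G H : Type*} [Group G] [Group H] (X : CrossedModule G H)

/-- A colouring is read as `((g₁₂, g₁₃, g₁₄, g₂₃, g₂₄, g₃₄), (h₁₂₃, h₁₂₄, h₁₃₄, h₂₃₄))`. -/
def IsFlatTetrahedron (t : (G × G × G × G × G × G) × (H × H × H × H)) : Prop :=
  X.δ t.2.1 * t.1.2.2.2.1 * t.1.1 * t.1.2.1⁻¹ = 1 ∧
    X.δ t.2.2.1 * t.1.2.2.2.2.1 * t.1.1 * t.1.2.2.1⁻¹ = 1 ∧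
    X.δ t.2.2.2.1 * t.1.2.2.2.2.2 * t.1.2.1 * t.1.2.2.1⁻¹ = 1 ∧
    X.δ t.2.2.2.2 * t.1.2.2.2.2.2 * t.1.2.2.2.1 * t.1.2.2.2.2.1⁻¹ = 1 ∧
    t.2.2.2.1 * X.act t.1.2.2.2.2.2 t.2.1 * t.2.2.2.2⁻¹ * t.2.2.1⁻¹ = 1

theorem face₂₃₄_flat_of_flat_faces {g₁₂ g₁₃ g₁₄ g₂₃ g₂₄ g₃₄ : G} {h₁₂₃ h₁₂₄ h₁₃₄ h₂₃₄ : H}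
    (h₁ : g₂₃ = (X.δ h₁₂₃)⁻¹ * g₁₃ * g₁₂⁻¹) (h₂ : g₂₄ = (X.δ h₁₂₄)⁻¹ * g₁₄ * g₁₂⁻¹)
    (h₃ : g₃₄ = (X.δ h₁₃₄)⁻¹ * g₁₄ * g₁₃⁻¹) (h₅ : h₁₂₄ = h₁₃₄ * X.act g₃₄ h₁₂₃ * h₂₃₄⁻¹) :
    X.δ h₂₃₄ * g₃₄ * g₂₃ * g₂₄⁻¹ = 1 := by
  subst h₂ h₅
  rw [map_mul, map_mul, map_inv, X.equivariance, h₁, h₃]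
  group

/-- The input is read as `((g₁₂, g₁₃, g₁₄), (h₁₂₃, h₁₃₄, h₂₃₄))`. -/
def fill (p : (G × G × G) × (H × H × H)) : (G × G × G × G × G × G) × (H × H × H × H) :=
  let g₂₃ := (X.δ p.2.1)⁻¹ * p.1.2.1 * p.1.1⁻¹
  let g₃₄ := (X.δ p.2.2.1)⁻¹ * p.1.2.2 * p.1.2.1⁻¹
  let h₁₂₄ := p.2.2.1 * X.act g₃₄ p.2.1 * p.2.2.2⁻¹
  let g₂₄ := (X.δ h₁₂₄)⁻¹ * p.1.2.2 * p.1.1⁻¹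
  ((p.1.1, p.1.2.1, p.1.2.2, g₂₃, g₂₄, g₃₄), (p.2.1, h₁₂₄, p.2.2.1, p.2.2.2))

def treeColoring (t : (G × G × G × G × G × G) × (H × H × H × H)) : (G × G × G) × (H × H × H) :=
  ((t.1.1, t.1.2.1, t.1.2.2.1), (t.2.1, t.2.2.2.1, t.2.2.2.2))

theorem isFlatTetrahedron_fill (p : (G × G × G) × (H × H × H)) :
    X.IsFlatTetrahedron (X.fill p) :=
  ⟨mul_mul_mul_inv_eq_one_iff.2 rfl, mul_mul_mul_inv_eq_one_iff.2 rfl,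
    mul_mul_mul_inv_eq_one_iff.2 rfl, X.face₂₃₄_flat_of_flat_faces rfl rfl rfl rfl,
    mul_inv_eq_one.2 rfl⟩

theorem fill_treeColoring {t : (G × G × G × G × G × G) × (H × H × H × H)}
    (ht : X.IsFlatTetrahedron t) : X.fill (treeColoring t) = t := by
  obtain ⟨⟨g₁₂, g₁₃, g₁₄, g₂₃, g₂₄, g₃₄⟩, h₁₂₃, h₁₂₄, h₁₃₄, h₂₃₄⟩ := t
  obtain ⟨h₁, h₂, h₃, -, h₅⟩ := ht
  dsimp only at h₁ h₂ h₃ h₅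
  rw [mul_mul_mul_inv_eq_one_iff] at h₁ h₂ h₃
  rw [mul_inv_eq_one] at h₅
  subst h₁ h₃ h₅ h₂
  rfl

def flatTetrahedronEquiv :
    {t // X.IsFlatTetrahedron t} ≃ (G × G × G) × (H × H × H) where
  toFun t := treeColoring t.1
  invFun p := ⟨X.fill p, X.isFlatTetrahedron_fill p⟩
  left_inv t := Subtype.ext (X.fill_treeColoring t.2)
  right_inv _ := rfl

end CrossedModule

/-- For finite `G`, `H`, the number of colorings of the single-tetrahedron
triangulation of `D³` satisfying the four face flatness conditions and the
tetrahedron flatness condition is exactly `|G|³ * |H|³` (so the state-sum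
invariant of `D³` equals `|H| / |G|`). -/
theorem card_tetrahedron_colorings {G H : Type*} [Group G] [Group H]
    [Fintype G] [Fintype H] (X : CrossedModule G H) :
    Nat.card {t : (G × G × G × G × G × G) × (H × H × H × H) //
      X.δ t.2.1 * t.1.2.2.2.1 * t.1.1 * t.1.2.1⁻¹ = 1 ∧
      X.δ t.2.2.1 * t.1.2.2.2.2.1 * t.1.1 * t.1.2.2.1⁻¹ = 1 ∧
      X.δ t.2.2.2.1 * t.1.2.2.2.2.2 * t.1.2.1 * t.1.2.2.1⁻¹ = 1 ∧
      X.δ t.2.2.2.2 * t.1.2.2.2.2.2 * t.1.2.2.2.1 * t.1.2.2.2.2.1⁻¹ = 1 ∧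
      t.2.2.2.1 * X.act t.1.2.2.2.2.2 t.2.1 * t.2.2.2.2⁻¹ * t.2.2.1⁻¹ = 1} =
    Fintype.card G ^ 3 * Fintype.card H ^ 3 := by
  change Nat.card {t // X.IsFlatTetrahedron t} = _
  rw [Nat.card_congr X.flatTetrahedronEquiv, Nat.card_eq_fintype_card]
  simp only [Fintype.card_prod]
  ring
end
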